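/- A Turing degree computes a diagonally non-computable function if and only if it computes a fixpoint-free function: for every set X, there is an X-computable d.n.c. function (relative to ∅) iff there is an X-computable function f with W_e ≠ W_{f(e)} for all e. -/

import Mathlib

open Classical Filter

noncomputable section

/-- Codes for partial functions recursive in an oracle. -/
inductive OCode : Type
  | zero | succ | left | right | oracle
  | pair (a b : OCode) | comp (a b : OCode) | prec (a b : OCode) | rfind' (a : OCode)

/-- Evaluation of an oracle code with oracle `O`. -/
def OCode.eval (O : ℕ →. ℕ) : OCode → ℕ →. ℕ
  | .zero => pure 0
  | .succ => Nat.succ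
  | .left => ↑fun n : ℕ => n.unpair.1
  | .right => ↑fun n : ℕ => n.unpair.2
  | .oracle => O
  | .pair a b => fun n => Nat.pair <$> a.eval O n <*> b.eval O n
  | .comp a b => fun n => b.eval O n >>= a.eval O
  | .prec a b => Nat.unpaired fun m n =>
      n.rec (a.eval O m) fun y IH => do let i ← IH; b.eval O (Nat.pair m (Nat.pair y i))
  | .rfind' a => fun n => Nat.rfind fun m => (fun k => k = 0) <$> a.eval O (Nat.pair n m)

/-- An injective numbering of oracle codes. -/
def OCode.encodeC : OCode → ℕ
  | .zero => Nat.pair 0 0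
  | .succ => Nat.pair 1 0
  | .left => Nat.pair 2 0
  | .right => Nat.pair 3 0
  | .oracle => Nat.pair 4 0
  | .pair a b => Nat.pair 5 (Nat.pair a.encodeC b.encodeC)
  | .comp a b => Nat.pair 6 (Nat.pair a.encodeC b.encodeC)
  | .prec a b => Nat.pair 7 (Nat.pair a.encodeC b.encodeC)
  | .rfind' a => Nat.pair 8 a.encodeC

/-- `f` is partial recursive in the oracle `O`. -/
def RecIn (O : ℕ →. ℕ) (f : ℕ →. ℕ) : Prop := ∃ c : OCode, c.eval O = f

/-- The `e`-th partial function recursive in `O` (`Φ_e^O`). -/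
def phi (O : ℕ →. ℕ) (e : ℕ) : ℕ →. ℕ :=
  if h : ∃ c : OCode, c.encodeC = e then h.choose.eval O else fun _ => Part.none

/-- The characteristic function of a set of naturals, as an oracle. -/
def chOracle (X : Set ℕ) : ℕ →. ℕ := fun n => Part.some (if n ∈ X then 1 else 0)

/-- A total function as an oracle. -/
def fnOracle (f : ℕ → ℕ) : ℕ →. ℕ := fun n => Part.some (f n)

/-- A two-variable total function as an oracle. -/
def pairFnOracle (f : ℕ → ℕ → ℕ) : ℕ →. ℕ :=
  fun n => Part.some (f n.unpair.1 n.unpair.2)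

/-- The Turing jump of a set `X` : the halting problem relative to `X`. -/
def jumpSet (X : Set ℕ) : Set ℕ := {e | (phi (chOracle X) e e).Dom}

/-- The effective join of two sets of naturals. -/
def joinSet (A B : Set ℕ) : Set ℕ :=
  {n | (n % 2 = 0 ∧ n / 2 ∈ A) ∨ (n % 2 = 1 ∧ n / 2 ∈ B)}

/-- The join of two oracles. -/
def joinO (O₁ O₂ : ℕ →. ℕ) : ℕ →. ℕ :=
  fun n => if n % 2 = 0 then O₁ (n / 2) else O₂ (n / 2)

/-- Turing reducibility between sets of naturals. -/
def setLEset (A B : Set ℕ) : Prop :=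
  RecIn (chOracle B) (fnOracle fun n => if n ∈ A then 1 else 0)

/-!
If `f` is fixpoint-free and `v` is a computable function with `φ_{v e} = φ_{φ_e(e)}` (s-m-n
applied to the universal function), then `f ∘ v` is d.n.c., since `f (v e) = φ_e(e)` would make
`v e` a fixed point of `f`. Conversely, let `f` be d.n.c., let `v e` be an index whose diagonal
value `φ_{v e}(v e)` is an element of `W_e` found by dovetailing, and let `u m` be an index of
`{m}`. If `W_{u (f (v e))} = W_e`, then `W_e = {f (v e)}`, so the element found is `f (v e)`
itself, i.e. `f (v e) = φ_{v e}(v e)`.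

The universal function and the s-m-n theorem for the numbering `phi (chOracle ∅)` come from a
primitive recursive decoding of `OCode.encodeC` into Mathlib's `Nat.Partrec.Code`.
-/

namespace OCode

theorem encodeC_injective : Function.Injective encodeC := by
  intro c
  induction c <;> intro d h <;> cases d <;> simp_all [encodeC, Nat.pair_eq_pair] <;> aesop

end OCode

theorem phi_encodeC (O : ℕ →. ℕ) (c : OCode) : phi O c.encodeC = c.eval O := by
  have h : ∃ d : OCode, d.encodeC = c.encodeC := ⟨c, rfl⟩
  exact (dif_pos h).trans (by rw [OCode.encodeC_injective h.choose_spec])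

theorem phi_of_not_exists_encodeC (O : ℕ →. ℕ) {e : ℕ} (h : ¬∃ c : OCode, c.encodeC = e) :
    phi O e = fun _ => Part.none :=
  dif_neg h

open Nat.Partrec (Code)

/-- `OCode.rfind'` searches from `0`, while `Code.rfind'` starts at the second component of its
input. -/
def muCode (c : Code) : Code := .comp (.rfind' c) (.pair .id .zero)

theorem eval_muCode (c : Code) :
    (muCode c).eval = fun n => Nat.rfind fun m => (fun k => k = 0) <$> c.eval (Nat.pair n m) := by
  simp [muCode, Code.eval, Seq.seq, pure, PFun.pure, Part.map_id']
  rfl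

def neverCode : Code := muCode .succ

theorem eval_neverCode : neverCode.eval = fun _ => Part.none := by
  funext n
  refine Part.eq_none_iff.2 fun a ha => ?_
  rw [neverCode, eval_muCode] at ha
  simpa [Code.eval] using Nat.rfind_spec ha

namespace OCode

def toCode : OCode → Code
  | zero | oracle => .zero -- `chOracle ∅` answers `0` everywhere
  | succ => .succ
  | left => .left
  | right => .right
  | pair a b => .pair a.toCode b.toCode
  | comp a b => .comp a.toCode b.toCode
  | prec a b => .prec a.toCode b.toCode
  | rfind' a => muCode a.toCode

theorem eval_toCode (c : OCode) : c.toCode.eval = c.eval (chOracle ∅) := by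
  induction c with
  | oracle => funext n; simp [toCode, OCode.eval, chOracle, Code.eval]; rfl
  | rfind' a iha => rw [toCode, eval_muCode, iha]; rfl
  | _ => simp_all [toCode, OCode.eval, Code.eval] <;> rfl

end OCode

/-- Inverts one step of `OCode.encodeC` on `Nat.pair k p`, given the decodings `d` of smaller
numbers; `none` on numbers that encode no code. -/
def decodeStep (d : ℕ → Option Code) (k p : ℕ) : Option Code :=
  if k = 0 ∧ p = 0 then some .zero
  else if k = 1 ∧ p = 0 then some .succ
  else if k = 2 ∧ p = 0 then some .left
  else if k = 3 ∧ p = 0 then some .right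
  else if k = 4 ∧ p = 0 then some .zero
  else if k = 5 then (d p.unpair.1).bind fun a => (d p.unpair.2).map (Code.pair a)
  else if k = 6 then (d p.unpair.1).bind fun a => (d p.unpair.2).map (Code.comp a)
  else if k = 7 then (d p.unpair.1).bind fun a => (d p.unpair.2).map (Code.prec a)
  else if k = 8 then (d p).map muCode
  else none

theorem Nat.lt_pair_of_le {k p m : ℕ} (hk : k ≠ 0) (hm : m ≤ p) : m < Nat.pair k p :=
  lt_of_lt_of_le (by omega) (Nat.add_le_pair k p)

theorem decodeStep_congr {d d' : ℕ → Option Code} {k p : ℕ}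
    (h : ∀ i < Nat.pair k p, d i = d' i) : decodeStep d k p = decodeStep d' k p := by
  rcases eq_or_ne k 0 with rfl | hk
  · simp [decodeStep]
  have hp : ∀ i ≤ p, d i = d' i := fun i hi => h i (Nat.lt_pair_of_le hk hi)
  simp only [decodeStep, hp _ (Nat.unpair_left_le p), hp _ (Nat.unpair_right_le p), hp p le_rfl]

def decodeCode (n : ℕ) : Option Code :=
  decodeStep (fun i => if _ : i < n then decodeCode i else none) n.unpair.1 n.unpair.2

theorem decodeCode_eq (n : ℕ) : decodeCode n = decodeStep decodeCode n.unpair.1 n.unpair.2 := by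
  rw [decodeCode]
  refine decodeStep_congr fun i hi => ?_
  rw [Nat.pair_unpair] at hi
  simp [hi]

theorem decodeCode_encodeC (c : OCode) : decodeCode c.encodeC = some c.toCode := by
  induction c <;> rw [decodeCode_eq] <;> simp_all [OCode.encodeC, decodeStep, OCode.toCode]

theorem exists_encodeC_of_decodeCode_eq_some {n : ℕ} {c : Code} (h : decodeCode n = some c) :
    ∃ oc : OCode, oc.encodeC = n ∧ oc.toCode = c := by
  induction n using Nat.strong_induction_on generalizing c with
  | _ n ih =>
  obtain ⟨k, p, rfl⟩ : ∃ k p, n = Nat.pair k p := ⟨_, _, (Nat.pair_unpair n).symm⟩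
  simp only [decodeCode_eq, Nat.unpair_pair] at h
  have ih_le {m : ℕ} (hm : m ≤ p) (hk : k ≠ 0) {c : Code} (h : decodeCode m = some c) :
      ∃ oc : OCode, oc.encodeC = m ∧ oc.toCode = c :=
    ih m (Nat.lt_pair_of_le hk hm) h
  unfold decodeStep at h
  split_ifs at h with h0 h1 h2 h3 h4 h5 h6 h7 h8 <;>
    simp only [Option.bind_eq_some_iff, Option.map_eq_some_iff, Option.some.injEq] at h
  · obtain ⟨rfl, rfl⟩ := h0; exact ⟨.zero, rfl, h⟩
  · obtain ⟨rfl, rfl⟩ := h1; exact ⟨.succ, rfl, h⟩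
  · obtain ⟨rfl, rfl⟩ := h2; exact ⟨.left, rfl, h⟩
  · obtain ⟨rfl, rfl⟩ := h3; exact ⟨.right, rfl, h⟩
  · obtain ⟨rfl, rfl⟩ := h4; exact ⟨.oracle, rfl, h⟩
  all_goals
    first
    | obtain ⟨a, ha, b, hb, rfl⟩ := h
      obtain ⟨oa, hoa, rfl⟩ := ih_le (Nat.unpair_left_le p) (by omega) ha
      obtain ⟨ob, hob, rfl⟩ := ih_le (Nat.unpair_right_le p) (by omega) hb
    | obtain ⟨a, ha, rfl⟩ := h
      obtain ⟨oa, hoa, rfl⟩ := ih_le le_rfl (by omega) ha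
  · exact ⟨.pair oa ob, by rw [OCode.encodeC, hoa, hob, Nat.pair_unpair, h5], rfl⟩
  · exact ⟨.comp oa ob, by rw [OCode.encodeC, hoa, hob, Nat.pair_unpair, h6], rfl⟩
  · exact ⟨.prec oa ob, by rw [OCode.encodeC, hoa, hob, Nat.pair_unpair, h7], rfl⟩
  · exact ⟨.rfind' oa, by rw [OCode.encodeC, hoa, h8], rfl⟩

theorem primrec_decodeStep : Primrec fun q : List (Option Code) × ℕ × ℕ =>
    decodeStep (fun i => q.1.getD i none) q.2.1 q.2.2 := by
  have hk (j : ℕ) : PrimrecPred fun q : List (Option Code) × ℕ × ℕ => q.2.1 = j :=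
    Primrec.eq.comp (Primrec.fst.comp Primrec.snd) (Primrec.const j)
  have hleaf (j : ℕ) : PrimrecPred fun q : List (Option Code) × ℕ × ℕ => q.2.1 = j ∧ q.2.2 = 0 :=
    (hk j).and (Primrec.eq.comp (Primrec.snd.comp Primrec.snd) (Primrec.const 0))
  have hd {f : List (Option Code) × ℕ × ℕ → ℕ} (hf : Primrec f) :
      Primrec fun q : List (Option Code) × ℕ × ℕ => q.1.getD (f q) none :=
    (Primrec.list_getD none).comp Primrec.fst hf
  have hp : Primrec fun q : List (Option Code) × ℕ × ℕ => q.2.2.unpair :=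
    Primrec.unpair.comp (Primrec.snd.comp Primrec.snd)
  have hbin {F : Code → Code → Code} (hF : Primrec₂ F) :
      Primrec fun q : List (Option Code) × ℕ × ℕ =>
        (q.1.getD q.2.2.unpair.1 none).bind fun a => (q.1.getD q.2.2.unpair.2 none).map (F a) :=
    Primrec.option_bind (hd (Primrec.fst.comp hp)) <|
      Primrec.option_map ((hd (Primrec.snd.comp hp)).comp Primrec.fst) <|
        hF.comp (Primrec.snd.comp Primrec.fst) Primrec.snd
  unfold decodeStep
  refine Primrec.ite (hleaf 0) (Primrec.const _) <| Primrec.ite (hleaf 1) (Primrec.const _) <|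
    Primrec.ite (hleaf 2) (Primrec.const _) <| Primrec.ite (hleaf 3) (Primrec.const _) <|
    Primrec.ite (hleaf 4) (Primrec.const _) <| Primrec.ite (hk 5) (hbin Code.primrec₂_pair) <|
    Primrec.ite (hk 6) (hbin Code.primrec₂_comp) <| Primrec.ite (hk 7) (hbin Code.primrec₂_prec) <|
    Primrec.ite (hk 8) ?_ (Primrec.const none)
  exact Primrec.option_map (hd (Primrec.snd.comp Primrec.snd)) <|
    (Code.primrec₂_comp.comp (Code.primrec_rfind'.comp Primrec.snd) (Primrec.const _)).to₂

theorem primrec_decodeCode : Primrec decodeCode := by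
  have hg : Primrec₂ fun (_ : Unit) (l : List (Option Code)) =>
      some (decodeStep (fun i => l.getD i none) l.length.unpair.1 l.length.unpair.2) :=
    (Primrec.option_some.comp (primrec_decodeStep.comp
      (Primrec.snd.pair (Primrec.unpair.comp (Primrec.list_length.comp Primrec.snd))))).to₂
  refine (Primrec.nat_strong_rec (fun (_ : Unit) n => decodeCode n) hg fun _ n => ?_).comp
    (Primrec.const ()) Primrec.id
  simp only [List.length_map, List.length_range, decodeCode_eq n, Option.some.injEq]
  refine decodeStep_congr fun i hi => ?_
  rw [Nat.pair_unpair] at hi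
  simp [List.getElem?_range hi]

theorem phi_chOracle_empty_eq_eval (e : ℕ) :
    phi (chOracle ∅) e = ((decodeCode e).getD neverCode).eval := by
  by_cases he : ∃ c : OCode, c.encodeC = e
  · obtain ⟨c, rfl⟩ := he
    rw [phi_encodeC, decodeCode_encodeC, Option.getD_some, OCode.eval_toCode]
  · have hnone : decodeCode e = none := Option.eq_none_iff_forall_ne_some.2 fun c hc =>
      let ⟨oc, hoc, _⟩ := exists_encodeC_of_decodeCode_eq_some hc
      he ⟨oc, hoc⟩
    rw [phi_of_not_exists_encodeC _ he, hnone, Option.getD_none, eval_neverCode]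

theorem partrec₂_phi_chOracle_empty : Partrec₂ (phi (chOracle ∅)) :=
  (Code.eval_part.comp ((Primrec.option_getD.comp primrec_decodeCode
    (Primrec.const neverCode)).to_comp.comp Computable.fst) Computable.snd).of_eq
    fun p => by rw [phi_chOracle_empty_eq_eval]

theorem Nat.Partrec.recIn {f : ℕ →. ℕ} (hf : Nat.Partrec f) (O : ℕ →. ℕ) : RecIn O f := by
  induction hf with
  | zero => exact ⟨.zero, rfl⟩
  | succ => exact ⟨.succ, rfl⟩
  | left => exact ⟨.left, rfl⟩
  | right => exact ⟨.right, rfl⟩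
  | pair _ _ ihf ihg =>
    obtain ⟨cf, rfl⟩ := ihf; obtain ⟨cg, rfl⟩ := ihg; exact ⟨.pair cf cg, rfl⟩
  | comp _ _ ihf ihg =>
    obtain ⟨cf, rfl⟩ := ihf; obtain ⟨cg, rfl⟩ := ihg; exact ⟨.comp cf cg, rfl⟩
  | prec _ _ ihf ihg =>
    obtain ⟨cf, rfl⟩ := ihf; obtain ⟨cg, rfl⟩ := ihg; exact ⟨.prec cf cg, rfl⟩
  | rfind _ ihf =>
    obtain ⟨cf, rfl⟩ := ihf; exact ⟨.rfind' cf, rfl⟩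

theorem Computable.recIn {f : ℕ → ℕ} (hf : Computable f) (O : ℕ →. ℕ) : RecIn O (fnOracle f) :=
  (Partrec.nat_iff.1 hf).recIn O

theorem RecIn.comp {O : ℕ →. ℕ} {f g : ℕ → ℕ}
    (hf : RecIn O (fnOracle f)) (hg : RecIn O (fnOracle g)) : RecIn O (fnOracle (f ∘ g)) := by
  obtain ⟨cf, hcf⟩ := hf
  obtain ⟨cg, hcg⟩ := hg
  refine ⟨.comp cf cg, funext fun n => ?_⟩
  show cg.eval O n >>= cf.eval O = _
  rw [hcf, hcg]
  exact Part.bind_some _ _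

namespace OCode

def const : ℕ → OCode
  | 0 => zero
  | n + 1 => comp succ (const n)

theorem eval_const (O : ℕ →. ℕ) (m x : ℕ) : (const m).eval O x = Part.some m := by
  induction m with
  | zero => rfl
  | succ m ih =>
    show (const m).eval O x >>= succ.eval O = _
    rw [ih]
    exact Part.bind_some _ _

theorem primrec_encodeC_const : Primrec fun m => (const m).encodeC := by
  have hstep : Primrec₂ fun (_ prev : ℕ) => Nat.pair 6 (Nat.pair (Nat.pair 1 0) prev) :=
    Primrec₂.natPair.comp₂ (Primrec₂.const 6)
      (Primrec₂.natPair.comp₂ (Primrec₂.const (Nat.pair 1 0)) Primrec.snd.to₂)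
  refine (Primrec.nat_rec₁ (Nat.pair 0 0) hstep).of_eq fun m => ?_
  induction m with
  | zero => rfl
  | succ m ih => simp only [ih]; rfl

def id : OCode := pair left right

theorem eval_id (O : ℕ →. ℕ) (x : ℕ) : id.eval O x = Part.some x := by
  simp [id, OCode.eval, Seq.seq]

end OCode

theorem exists_computable_phi_eq {F : ℕ → ℕ →. ℕ} (hF : Partrec₂ F) (O : ℕ →. ℕ) :
    ∃ k : ℕ → ℕ, Computable k ∧ ∀ e x, phi O (k e) x = F e x := by
  obtain ⟨c, hc⟩ := (Partrec₂.unpaired'.2 hF).recIn O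
  refine ⟨fun e => (OCode.comp c (.pair (.const e) .id)).encodeC, ?_, fun e x => ?_⟩
  · -- the tags `6` and `5` of `encodeC` are those of `comp` and `pair`
    refine Primrec.to_comp ?_
    exact Primrec₂.natPair.comp (Primrec.const 6)
      (Primrec₂.natPair.comp (Primrec.const c.encodeC)
        (Primrec₂.natPair.comp (Primrec.const 5)
          (Primrec₂.natPair.comp OCode.primrec_encodeC_const (Primrec.const OCode.id.encodeC))))
  · rw [phi_encodeC]
    show (OCode.pair (.const e) .id).eval O x >>= c.eval O = _
    have hpair : (OCode.pair (.const e) .id).eval O x = Part.some (Nat.pair e x) := by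
      simp [OCode.eval, OCode.eval_const, OCode.eval_id, Seq.seq]
    rw [hpair, hc]
    simp [Part.bind_some, Nat.unpaired]

theorem exists_partrec_choice {F : ℕ → ℕ →. ℕ} (hF : Partrec₂ F) :
    ∃ s : ℕ →. ℕ, Partrec s ∧ (∀ e, (∃ x, (F e x).Dom) → (s e).Dom) ∧
      ∀ e, ∀ y ∈ s e, (F e y).Dom := by
  obtain ⟨c, hc⟩ := Code.exists_code.1 (Partrec₂.unpaired'.2 hF)
  let g (e n : ℕ) : Option ℕ :=
    (Code.evaln n.unpair.2 c (Nat.pair e n.unpair.1)).map fun _ => n.unpair.1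
  have hg : Computable₂ g := by
    have hn : Primrec fun q : ℕ × ℕ => q.2.unpair := Primrec.unpair.comp Primrec.snd
    refine Primrec.to_comp (Primrec.option_map (Code.primrec_evaln.comp
      (g := fun q : ℕ × ℕ => ((q.2.unpair.2, c), Nat.pair q.1 q.2.unpair.1)) ?_)
      (Primrec.fst.comp (hn.comp Primrec.fst)).to₂)
    exact ((Primrec.snd.comp hn).pair (Primrec.const c)).pair
      (Primrec₂.natPair.comp Primrec.fst (Primrec.fst.comp hn))
  refine ⟨fun e => Nat.rfindOpt (g e), Partrec.rfindOpt hg, fun e ⟨x, hx⟩ => ?_, fun e y hy => ?_⟩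
  · have hmem : (F e x).get hx ∈ c.eval (Nat.pair e x) := by
      rw [hc]
      simpa [Nat.unpaired] using Part.get_mem hx
    obtain ⟨k, hk⟩ := Code.evaln_complete.1 hmem
    exact Nat.rfindOpt_dom.2 ⟨Nat.pair x k, x, by simpa [g] using ⟨_, hk⟩⟩
  · obtain ⟨n, hn⟩ := Nat.rfindOpt_spec hy
    obtain ⟨v, hv, rfl⟩ := Option.map_eq_some_iff.1 hn
    have := Code.evaln_sound hv
    simp only [hc, Nat.unpaired, Nat.unpair_pair] at this
    exact Part.dom_iff_mem.2 ⟨v, this⟩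

def IsDNC (f : ℕ → ℕ) : Prop := ∀ e, f e ∉ phi (chOracle ∅) e e

def IsFixpointFree (f : ℕ → ℕ) : Prop :=
  ∀ e, {n | (phi (chOracle ∅) (f e) n).Dom} ≠ {n | (phi (chOracle ∅) e n).Dom}

theorem IsDNC.exists_isFixpointFree_comp {f : ℕ → ℕ} (hf : IsDNC f) :
    ∃ u v : ℕ → ℕ, Computable u ∧ Computable v ∧ IsFixpointFree (u ∘ f ∘ v) := by
  obtain ⟨s, hs, hs_dom, hs_mem⟩ := exists_partrec_choice partrec₂_phi_chOracle_empty
  obtain ⟨v, hv, hvs⟩ := exists_computable_phi_eq (F := fun e _ => s e)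
    (hs.comp Computable.fst) (chOracle ∅)
  obtain ⟨u, hu, hus⟩ := exists_computable_phi_eq
    (F := fun m x => ((if x = m then some 0 else none : Option ℕ) : Part ℕ))
    (Computable.ofOption (Primrec.ite (Primrec.eq.comp Primrec.snd Primrec.fst)
      (Primrec.const _) (Primrec.const _)).to_comp) (chOracle ∅)
  refine ⟨u, v, hu, hv, fun e he => ?_⟩
  have hW : ∀ x, (phi (chOracle ∅) e x).Dom ↔ x = f (v e) := fun x => by
    simpa [hus] using (Set.ext_iff.1 he x).symm
  obtain ⟨y, hy⟩ := Part.dom_iff_mem.1 (hs_dom e ⟨_, (hW _).2 rfl⟩)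
  have hyf : y = f (v e) := (hW y).1 (hs_mem e y hy)
  exact hf (v e) (by rw [hvs, ← hyf]; exact hy)

theorem IsFixpointFree.exists_isDNC_comp {f : ℕ → ℕ} (hf : IsFixpointFree f) :
    ∃ v : ℕ → ℕ, Computable v ∧ IsDNC (f ∘ v) := by
  have hU : Partrec₂ fun e x => (phi (chOracle ∅) e e).bind fun i => phi (chOracle ∅) i x :=
    (partrec₂_phi_chOracle_empty.comp Computable.fst Computable.fst).bind
      (partrec₂_phi_chOracle_empty.comp Computable.snd (Computable.snd.comp Computable.fst))
  obtain ⟨v, hv, hvU⟩ := exists_computable_phi_eq hU (chOracle ∅)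
  refine ⟨v, hv, fun e he => hf (v e) ?_⟩
  have hee : phi (chOracle ∅) e e = Part.some (f (v e)) := Part.eq_some_iff.2 he
  ext n
  simp [hvU, hee]

theorem stmt2 (X : Set ℕ) :
    (∃ f : ℕ → ℕ, RecIn (chOracle X) (fnOracle f) ∧
      ∀ e : ℕ, f e ∉ phi (chOracle ∅) e e) ↔
    (∃ f : ℕ → ℕ, RecIn (chOracle X) (fnOracle f) ∧
      ∀ e : ℕ, {n | (phi (chOracle ∅) (f e) n).Dom} ≠ {n | (phi (chOracle ∅) e n).Dom}) := by
  constructor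
  · rintro ⟨f, hfX, hf⟩
    obtain ⟨u, v, hu, hv, hfix⟩ := IsDNC.exists_isFixpointFree_comp hf
    exact ⟨u ∘ f ∘ v, (hu.recIn _).comp (hfX.comp (hv.recIn _)), hfix⟩
  · rintro ⟨f, hfX, hf⟩
    obtain ⟨v, hv, hdnc⟩ := IsFixpointFree.exists_isDNC_comp hf
    exact ⟨f ∘ v, hfX.comp (hv.recIn _), hdnc⟩

end
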